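/- arXiv:2312.14317 — 2 statements merged into one kernel-verified Lean document; each statement's English description precedes it below -/
import Mathlib

section
/- Let r ≥ 1, let a_0,…,a_{r−1} be complex numbers, and let n = (n_0,…,n_{r−1}) ∈ ℕ^r with n_j ≥ 1 for all j. Then for every k ∈ {0,…,r−1} the polynomial identity (x − (a_k + |n|))·C^a_n(x) − C^a_{n+e_k}(x) = Σ_{j=0}^{r−1} a_j·n_j·C^a_{n−e_j}(x) holds in ℂ[x], where e_k is the k-th standard unit multi-index. -/
open Polynomial

/-- The polynomial rising Pochhammer symbol `(p)_m = p(p+1)⋯(p+m-1)`. -/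
noncomputable def pochP (p : Polynomial ℂ) (m : ℕ) : Polynomial ℂ :=
  ∏ i ∈ Finset.range m, (p + Polynomial.C (i : ℂ))

/-- The type II Charlier--Angelesco polynomial (in the variable `x = z^r`). -/
noncomputable def charlierAngelescoP (r : ℕ) (a : Fin r → ℂ) (n : Fin r → ℕ) :
    Polynomial ℂ :=
  ∑ k ∈ Fintype.piFinset (fun i : Fin r => Finset.range (n i + 1)),
    Polynomial.C ((∏ ℓ : Fin r, ((n ℓ).choose (k ℓ) : ℂ) * (-(a ℓ)) ^ (n ℓ - k ℓ)) *
        (-1) ^ (∑ i, k i)) *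
      pochP (-X) (∑ i, k i)

/-- Falling factorial polynomial `x(x-1)⋯(x-m+1)`. -/
noncomputable def fallP (m : ℕ) : Polynomial ℂ :=
  ∏ i ∈ Finset.range m, (X - C (i : ℂ))

/-- Linear extension of `X^m ↦ fallP m`. -/
noncomputable def phi (p : Polynomial ℂ) : Polynomial ℂ :=
  p.sum fun m c => C c * fallP m

lemma phi_zero : phi 0 = 0 := by simp [phi]

lemma phi_add (p q : Polynomial ℂ) : phi (p + q) = phi p + phi q := by
  unfold phi
  apply Polynomial.sum_add_index <;> intros <;> simp [add_mul]

noncomputable def phiA : Polynomial ℂ →+ Polynomial ℂ :=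
  { toFun := phi, map_zero' := phi_zero, map_add' := phi_add }

lemma phi_monomial (m : ℕ) (c : ℂ) : phi (monomial m c) = C c * fallP m := by
  unfold phi; rw [Polynomial.sum_monomial_index]; simp

lemma phi_C_mul (c : ℂ) (p : Polynomial ℂ) : phi (C c * p) = C c * phi p := by
  induction p using Polynomial.induction_on' with
  | add p q hp hq => rw [mul_add, phi_add, phi_add, hp, hq, mul_add]
  | monomial m b =>
      rw [C_mul_monomial, phi_monomial, phi_monomial, C_mul, mul_assoc]

lemma fallP_succ (m : ℕ) : fallP (m + 1) = fallP m * (X - C (m : ℂ)) :=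
  Finset.prod_range_succ _ _

lemma X_mul_fallP (m : ℕ) : X * fallP m = fallP (m + 1) + C (m : ℂ) * fallP m := by
  rw [fallP_succ]; ring

lemma X_mul_monomial' (m : ℕ) (c : ℂ) :
    (X : Polynomial ℂ) * monomial m c = monomial (m + 1) c := by
  rw [← C_mul_X_pow_eq_monomial, ← C_mul_X_pow_eq_monomial, pow_succ]; ring

lemma phi_key (p : Polynomial ℂ) :
    X * phi p = phi (X * p) + phi (X * derivative p) := by
  induction p using Polynomial.induction_on' with
  | add p q hp hq =>
      rw [phi_add, mul_add, hp, hq, mul_add, phi_add, derivative_add, mul_add, phi_add]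
      ring
  | monomial m c =>
      rw [phi_monomial, derivative_monomial, X_mul_monomial', phi_monomial]
      cases m with
      | zero =>
          simp only [Nat.cast_zero, mul_zero, monomial_zero_right, phi_zero, add_zero,
            fallP, Finset.prod_range_zero, map_zero, mul_one]
          rw [Finset.prod_range_one]
          simp only [Nat.cast_zero, map_zero, sub_zero]
          ring
      | succ m =>
          rw [X_mul_monomial', phi_monomial]
          simp only [Nat.add_sub_cancel]
          rw [mul_left_comm X (C c), X_mul_fallP, C_mul]
          push_cast
          ring

lemma phiA_apply (p : Polynomial ℂ) : phiA p = phi p := rfl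

lemma fallP_eq_poch (m : ℕ) : fallP m = C ((-1 : ℂ) ^ m) * pochP (-X) m := by
  unfold fallP pochP
  calc ∏ i ∈ Finset.range m, (X - C (i : ℂ))
      = ∏ i ∈ Finset.range m, (C (-1 : ℂ) * (-X + C (i : ℂ))) := by
        refine Finset.prod_congr rfl fun i _ => ?_
        simp only [map_neg, map_one]
        ring
    _ = (∏ _i ∈ Finset.range m, C (-1 : ℂ)) * ∏ i ∈ Finset.range m, (-X + C (i : ℂ)) :=
        Finset.prod_mul_distrib
    _ = C ((-1 : ℂ) ^ m) * ∏ i ∈ Finset.range m, (-X + C (i : ℂ)) := by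
        rw [Finset.prod_const, Finset.card_range, map_pow]

lemma binom_expand (b : ℂ) (nn : ℕ) :
    ((X : Polynomial ℂ) - C b) ^ nn =
      ∑ kk ∈ Finset.range (nn + 1), C ((nn.choose kk : ℂ) * (-b) ^ (nn - kk)) * X ^ kk := by
  rw [sub_eq_add_neg, ← map_neg C b, add_pow]
  refine Finset.sum_congr rfl fun kk _ => ?_
  rw [← map_pow, ← Polynomial.C_eq_natCast]
  rw [C_mul]
  ring

/-- The "symbol" polynomial `∏ (X - a_ℓ)^{n_ℓ}`. -/
noncomputable def Pp (r : ℕ) (a : Fin r → ℂ) (n : Fin r → ℕ) : Polynomial ℂ :=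
  ∏ ℓ : Fin r, (X - C (a ℓ)) ^ (n ℓ)

lemma charlier_eq_phi (r : ℕ) (a : Fin r → ℂ) (n : Fin r → ℕ) :
    charlierAngelescoP r a n = phi (Pp r a n) := by
  unfold Pp
  have h0 := Finset.prod_univ_sum (fun i : Fin r => Finset.range (n i + 1))
    (fun ℓ t => C (((n ℓ).choose t : ℂ) * (-(a ℓ)) ^ (n ℓ - t)) * X ^ t)
  have h1 : (∏ ℓ : Fin r, (X - C (a ℓ)) ^ (n ℓ)) =
      ∑ k ∈ Fintype.piFinset (fun i : Fin r => Finset.range (n i + 1)),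
        ∏ ℓ : Fin r, C (((n ℓ).choose (k ℓ) : ℂ) * (-(a ℓ)) ^ (n ℓ - k ℓ)) * X ^ (k ℓ) := by
    rw [← h0]
    exact Finset.prod_congr rfl fun ℓ _ => binom_expand (a ℓ) (n ℓ)
  rw [h1, show phi = ⇑phiA from rfl, map_sum]
  unfold charlierAngelescoP
  refine Finset.sum_congr rfl fun k _ => ?_
  have h2 : (∏ ℓ : Fin r, C (((n ℓ).choose (k ℓ) : ℂ) * (-(a ℓ)) ^ (n ℓ - k ℓ)) * X ^ (k ℓ)) =
      C (∏ ℓ : Fin r, ((n ℓ).choose (k ℓ) : ℂ) * (-(a ℓ)) ^ (n ℓ - k ℓ)) * X ^ (∑ i, k i) := by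
    rw [Finset.prod_mul_distrib, map_prod, Finset.prod_pow_eq_pow_sum]
  rw [h2, phiA_apply, C_mul_X_pow_eq_monomial, phi_monomial, fallP_eq_poch, C_mul, mul_assoc]


lemma polyDeriv_finset_prod {ι : Type*} [DecidableEq ι] (s : Finset ι) (f : ι → Polynomial ℂ) :
    derivative (∏ i ∈ s, f i) =
      ∑ b ∈ s, (∏ i ∈ s.erase b, f i) * derivative (f b) := by
  induction s using Finset.induction_on with
  | empty => simp
  | @insert a s ha ih =>
      rw [Finset.prod_insert ha, derivative_mul, ih, Finset.sum_insert ha,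
        Finset.erase_insert ha, Finset.mul_sum]
      rw [mul_comm (derivative (f a)) (∏ i ∈ s, f i)]
      congr 1
      refine Finset.sum_congr rfl fun b hb => ?_
      have hba : a ≠ b := fun h => ha (h ▸ hb)
      have hb' : a ∉ s.erase b := fun h => ha (Finset.mem_of_mem_erase h)
      rw [Finset.erase_insert_of_ne hba, Finset.prod_insert hb', mul_assoc]

lemma phi_sub (p q : Polynomial ℂ) : phi (p - q) = phi p - phi q := by
  rw [show phi = ⇑phiA from rfl]; exact map_sub phiA p q

lemma Pp_succ (r : ℕ) (a : Fin r → ℂ) (n : Fin r → ℕ) (k : Fin r) :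
    Pp r a (fun i => n i + if i = k then 1 else 0) = (X - C (a k)) * Pp r a n := by
  unfold Pp
  rw [← Finset.mul_prod_erase Finset.univ
      (fun ℓ => (X - C (a ℓ)) ^ (n ℓ + if ℓ = k then 1 else 0)) (Finset.mem_univ k),
    ← Finset.mul_prod_erase Finset.univ
      (fun ℓ => (X - C (a ℓ)) ^ (n ℓ)) (Finset.mem_univ k)]
  simp only [if_pos rfl, if_true]
  rw [pow_succ', mul_assoc]
  congr 1
  congr 1
  exact Finset.prod_congr rfl fun ℓ hℓ => by
    rw [if_neg (Finset.ne_of_mem_erase hℓ), Nat.add_zero]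

lemma Pp_deriv (r : ℕ) (a : Fin r → ℂ) (n : Fin r → ℕ) (hn : ∀ j, 1 ≤ n j) :
    X * derivative (Pp r a n) = C ((∑ i, n i : ℕ) : ℂ) * Pp r a n
      + ∑ j, C (a j * (n j : ℂ)) * Pp r a (fun i => n i - if i = j then 1 else 0) := by
  unfold Pp
  rw [polyDeriv_finset_prod, Finset.mul_sum]
  have hC : C ((∑ i, n i : ℕ) : ℂ) * ∏ ℓ : Fin r, (X - C (a ℓ)) ^ (n ℓ)
      = ∑ j, C ((n j : ℕ) : ℂ) * ∏ ℓ : Fin r, (X - C (a ℓ)) ^ (n ℓ) := by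
    rw [Nat.cast_sum, map_sum, Finset.sum_mul]
  rw [hC, ← Finset.sum_add_distrib]
  refine Finset.sum_congr rfl fun j _ => ?_
  have hd : derivative ((X - C (a j)) ^ (n j))
      = C ((n j : ℕ) : ℂ) * (X - C (a j)) ^ (n j - 1) := by
    rw [derivative_pow, derivative_sub, derivative_X, derivative_C, sub_zero, mul_one]
  rw [hd]
  set Q := ∏ i ∈ Finset.univ.erase j, (X - C (a i)) ^ (n i) with hQ
  have hP : ∏ ℓ : Fin r, (X - C (a ℓ)) ^ (n ℓ) = (X - C (a j)) ^ (n j) * Q :=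
    (Finset.mul_prod_erase Finset.univ _ (Finset.mem_univ j)).symm
  have hPj : ∏ ℓ : Fin r, (X - C (a ℓ)) ^ (n ℓ - if ℓ = j then 1 else 0)
      = (X - C (a j)) ^ (n j - 1) * Q := by
    rw [← Finset.mul_prod_erase Finset.univ _ (Finset.mem_univ j)]
    simp only [if_pos rfl]
    congr 1
    exact Finset.prod_congr rfl fun ℓ hℓ => by
      rw [if_neg (Finset.ne_of_mem_erase hℓ), Nat.sub_zero]
  rw [hP, hPj]
  have hpow : (X - C (a j)) * (X - C (a j)) ^ (n j - 1) = (X - C (a j)) ^ (n j) := by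
    have h1j := hn j
    rw [← pow_succ']
    congr 1
    omega
  have hx : (X : Polynomial ℂ) = (X - C (a j)) + C (a j) := by ring
  calc X * (Q * (C ((n j : ℕ) : ℂ) * (X - C (a j)) ^ (n j - 1)))
      = C ((n j : ℕ) : ℂ) * (((X - C (a j)) * (X - C (a j)) ^ (n j - 1)) * Q)
        + (C (a j) * C ((n j : ℕ) : ℂ)) * ((X - C (a j)) ^ (n j - 1) * Q) := by
          rw [hx]; ring
    _ = C ((n j : ℕ) : ℂ) * ((X - C (a j)) ^ (n j) * Q)
        + C (a j * ((n j : ℕ) : ℂ)) * ((X - C (a j)) ^ (n j - 1) * Q) := by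
          rw [hpow, C_mul]

/-- Nearest neighbor recurrence relation for the type II
Charlier--Angelesco polynomials:
`(x - (a_k + |n|)) C^a_n(x) - C^a_{n+e_k}(x) = ∑_j a_j n_j C^a_{n-e_j}(x)`. -/
theorem charlier_angelesco_recurrence (r : ℕ) (hr : 1 ≤ r) (a : Fin r → ℂ)
    (n : Fin r → ℕ) (hn : ∀ j, 1 ≤ n j) (k : Fin r) :
    ((X : Polynomial ℂ) - Polynomial.C (a k + ((∑ i, n i : ℕ) : ℂ))) *
        charlierAngelescoP r a n -
      charlierAngelescoP r a (fun i => n i + if i = k then 1 else 0)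
    = ∑ j : Fin r, Polynomial.C (a j * (n j : ℂ)) *
        charlierAngelescoP r a (fun i => n i - if i = j then 1 else 0) := by
  simp only [charlier_eq_phi]
  rw [Pp_succ r a n k]
  have key := phi_key (Pp r a n)
  have h3 : phi ((X - C (a k)) * Pp r a n)
      = phi (X * Pp r a n) - C (a k) * phi (Pp r a n) := by
    rw [sub_mul, phi_sub, phi_C_mul]
  have h4 : phi (X * derivative (Pp r a n))
      = C ((∑ i, n i : ℕ) : ℂ) * phi (Pp r a n)
        + ∑ j, C (a j * (n j : ℂ)) * phi (Pp r a (fun i => n i - if i = j then 1 else 0)) := by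
    rw [Pp_deriv r a n hn, show phi = ⇑phiA from rfl, map_add, map_sum]
    simp only [phiA_apply, phi_C_mul]
  rw [map_add C]
  linear_combination key - h3 + h4
end

section
/- Let r ≥ 1, let c_0,…,c_{r−1} be complex numbers with c_ℓ ≠ 0 and c_ℓ ≠ 1 for all ℓ, let β ∈ ℂ, and let n = (n_0,…,n_{r−1}) ∈ ℕ^r. For γ ∈ ℂ define (Ψ^γ_{c} f)(x) = (c/(c−1))·((x+γ−1)·f(x) − (x/c)·f(x−1)) on functions f : ℂ → ℂ, and set N_ℓ = n_0 + ⋯ + n_{ℓ−1} (with N_0 = 0). Then the composition (Ψ^{β+N_0+1}_{c_0} ∘ ⋯ ∘ Ψ^{β+N_0+n_0}_{c_0}) ∘ (Ψ^{β+N_1+1}_{c_1} ∘ ⋯ ∘ Ψ^{β+N_1+n_1}_{c_1}) ∘ ⋯ ∘ (Ψ^{β+N_{r−1}+1}_{c_{r−1}} ∘ ⋯ ∘ Ψ^{β+N_{r−1}+n_{r−1}}_{c_{r−1}}) applied to the constant function 1 equals, at every x ∈ ℂ, the explicit polynomial M^{β,c}_n(x) = Σ_{k_0=0}^{n_0}⋯Σ_{k_{r−1}=0}^{n_{r−1}}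 (Π_{ℓ=0}^{r−1} binom(n_ℓ,k_ℓ)·c_ℓ^{n_ℓ−k_ℓ}/(c_ℓ−1)^{n_ℓ})·(−x)_{|k|}·(x+β)_{|n|−|k|}, where |k| = k_0+⋯+k_{r−1}, |n| = n_0+⋯+n_{r−1}, and (y)_m is the rising Pochhammer symbol. -/
/-- The rising Pochhammer symbol `(y)_m = y(y+1)⋯(y+m-1)`. -/
noncomputable def poch (y : ℂ) (m : ℕ) : ℂ := ∏ i ∈ Finset.range m, (y + i)

/-- The Meixner raising operator
`(Ψ^γ_c f)(x) = (c/(c-1))·((x+γ-1)·f(x) - (x/c)·f(x-1))`. -/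
noncomputable def PsiOp (γ c : ℂ) (f : ℂ → ℂ) : ℂ → ℂ :=
  fun x => (c / (c - 1)) * ((x + γ - 1) * f x - (x / c) * f (x - 1))

/-- The composition `Ψ^{γ₀+1}_c ∘ Ψ^{γ₀+2}_c ∘ ⋯ ∘ Ψ^{γ₀+j}_c`. -/
noncomputable def chainPsi (c : ℂ) : ℂ → ℕ → (ℂ → ℂ) → (ℂ → ℂ)
  | _, 0 => id
  | γ₀, j + 1 => PsiOp (γ₀ + 1) c ∘ chainPsi c (γ₀ + 1) j

/-- The explicit type II Meixner--Angelesco polynomial of the first kind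
(as a function of `x = z^r`). -/
noncomputable def meixnerAngelesco (r : ℕ) (β : ℂ) (c : Fin r → ℂ) (n : Fin r → ℕ)
    (x : ℂ) : ℂ :=
  ∑ k ∈ Fintype.piFinset (fun i : Fin r => Finset.range (n i + 1)),
    (∏ ℓ : Fin r, ((n ℓ).choose (k ℓ) : ℂ) * (c ℓ) ^ (n ℓ - k ℓ) / (c ℓ - 1) ^ (n ℓ)) *
      poch (-x) (∑ i, k i) * poch (x + β) ((∑ i, n i) - ∑ i, k i)

/-!
On the products `y ↦ (-y)_a (y + γ)_b` the operator `Ψ^{γ+1}_c` acts as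
`(c - 1)⁻¹ (c·[b ↦ b + 1] + [a ↦ a + 1])` while lowering the shift `γ + 1` to `γ`, because
`(x + γ)(x + γ + 1)_b = (x + γ)_{b+1}` and `-x (-x + 1)_a = (-x)_{a+1}`. The shifts in a chain
`Ψ^{γ+1}_c ∘ ⋯ ∘ Ψ^{γ+m}_c` are matched so that this applies at every step, hence the chain
expands binomially by Pascal's rule. The ray offsets `N_ℓ` are matched the same way, so the
chains over the rays multiply the binomial weights; apply this to `1 = (-y)_0 (y + β + |n|)_0`.
-/

open Finset

noncomputable def pochPair (a b : ℕ) (γ y : ℂ) : ℂ := poch (-y) a * poch (y + γ) b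

lemma poch_succ (y : ℂ) (m : ℕ) : poch y (m + 1) = y * poch (y + 1) m := by
  simp only [poch, prod_range_succ', Nat.cast_add, Nat.cast_one, Nat.cast_zero, add_zero]
  rw [mul_comm]
  congr 1
  exact prod_congr rfl fun i _ => by ring

lemma PsiOp_pochPair {c : ℂ} (hc : c ≠ 0) (γ : ℂ) (a b : ℕ) :
    PsiOp (γ + 1) c (pochPair a b (γ + 1)) =
      (c - 1)⁻¹ • (c • pochPair a (b + 1) γ + pochPair (a + 1) b γ) := by
  funext y
  have hb : poch (y + γ) (b + 1) = (y + γ) * poch (y + (γ + 1)) b := by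
    rw [poch_succ, add_assoc]
  have ha : poch (-y) (a + 1) = -y * poch (-(y - 1)) a := by
    rw [poch_succ, neg_sub, neg_add_eq_sub]
  simp only [PsiOp, pochPair, Pi.smul_apply, Pi.add_apply, smul_eq_mul, hb, ha,
    show y - 1 + (γ + 1) = y + γ by ring]
  field_simp
  ring

noncomputable def psiOpLinear (γ c : ℂ) : (ℂ → ℂ) →ₗ[ℂ] (ℂ → ℂ) where
  toFun := PsiOp γ c
  map_add' f g := by funext x; simp only [PsiOp, Pi.add_apply]; ring
  map_smul' t f := by
    funext x; simp only [PsiOp, Pi.smul_apply, smul_eq_mul, RingHom.id_apply]; ring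

noncomputable def chainPsiLinear (c : ℂ) : ℂ → ℕ → (ℂ → ℂ) →ₗ[ℂ] (ℂ → ℂ)
  | _, 0 => LinearMap.id
  | γ, j + 1 => psiOpLinear (γ + 1) c ∘ₗ chainPsiLinear c (γ + 1) j

lemma coe_psiOpLinear (γ c : ℂ) : ⇑(psiOpLinear γ c) = PsiOp γ c := rfl

lemma coe_chainPsiLinear (c γ : ℂ) (m : ℕ) : ⇑(chainPsiLinear c γ m) = chainPsi c γ m := by
  induction m generalizing γ with
  | zero => rfl
  | succ m ih => simp only [chainPsiLinear, chainPsi, LinearMap.coe_comp, ih]; rfl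

lemma chainPsi_pochPair_binomial {c : ℂ} (hc : c ≠ 0) (m a b : ℕ) (γ : ℂ) :
    chainPsi c γ m (pochPair a b (γ + m)) =
      ((c - 1) ^ m)⁻¹ •
        ∑ k ∈ range (m + 1), m.choose k • c ^ (m - k) • pochPair (a + k) (b + (m - k)) γ := by
  induction m generalizing γ with
  | zero => simp [chainPsi]
  | succ m ih =>
    have hγ : γ + ↑(m + 1) = γ + 1 + m := by push_cast; ring
    rw [chainPsi, Function.comp_apply, hγ, ih, ← coe_psiOpLinear, map_smul, map_sum]
    simp_rw [map_nsmul, map_smul, coe_psiOpLinear, PsiOp_pochPair hc]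
    rw [sum_choose_succ_nsmul (fun i j => c ^ j • pochPair (a + i) (b + j) γ), pow_succ, mul_inv,
      mul_smul]
    congr 1
    rw [← sum_add_distrib, smul_sum]
    refine sum_congr rfl fun k hk => ?_
    have hkm : m + 1 - k = m - k + 1 := by have := mem_range.1 hk; omega
    simp only [hkm, add_assoc, pow_succ]
    module

noncomputable def meixnerWeight (c : ℂ) (m k : ℕ) : ℂ :=
  (m.choose k : ℂ) * c ^ (m - k) / (c - 1) ^ m

lemma chainPsi_pochPair {c : ℂ} (hc : c ≠ 0) (m a b : ℕ) (γ : ℂ) :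
    chainPsi c γ m (pochPair a b (γ + m)) =
      ∑ k ∈ range (m + 1), meixnerWeight c m k • pochPair (a + k) (b + (m - k)) γ := by
  rw [chainPsi_pochPair_binomial hc, smul_sum]
  refine sum_congr rfl fun k _ => ?_
  rw [← Nat.cast_smul_eq_nsmul ℂ, smul_smul, smul_smul, meixnerWeight]
  ring_nf

noncomputable def rodriguesOp (r : ℕ) (β : ℂ) (c : Fin r → ℂ) (n : Fin r → ℕ) :
    (ℂ → ℂ) → (ℂ → ℂ) :=
  (List.finRange r).foldr
    (fun ℓ g =>
      chainPsi (c ℓ)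
        (β + ((∑ i ∈ Finset.univ.filter (fun i : Fin r => i < ℓ), n i : ℕ) : ℂ))
        (n ℓ) ∘ g)
    id

lemma sum_filter_lt_succ {M : Type*} [AddCommMonoid M] {r : ℕ} (f : Fin (r + 1) → M)
    (j : Fin r) :
    ∑ i ∈ univ.filter (· < j.succ), f i = f 0 + ∑ i ∈ univ.filter (· < j), f i.succ := by
  simp [sum_filter, Fin.sum_univ_succ, Fin.succ_pos, Fin.succ_lt_succ_iff]

lemma rodriguesOp_succ (r : ℕ) (β : ℂ) (c : Fin (r + 1) → ℂ) (n : Fin (r + 1) → ℕ) :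
    rodriguesOp (r + 1) β c n =
      chainPsi (c 0) β (n 0) ∘ rodriguesOp r (β + n 0) (Fin.tail c) (Fin.tail n) := by
  simp only [rodriguesOp, List.finRange_succ, List.foldr_cons, List.foldr_map, sum_filter_lt_succ,
    Nat.cast_add, add_assoc, Fin.not_lt_zero, filter_false, sum_empty, Nat.cast_zero, add_zero,
    Fin.tail]

lemma sum_piFinset_succ {α M : Type*} [AddCommMonoid M] {r : ℕ} (s : Fin (r + 1) → Finset α)
    (f : (Fin (r + 1) → α) → M) :
    ∑ k ∈ Fintype.piFinset s, f k =
      ∑ k₀ ∈ s 0, ∑ k ∈ Fintype.piFinset (Fin.tail s), f (Fin.cons k₀ k) := by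
  have h := filter_piFinset_eq_map_consEquiv s (fun _ => True)
  simp only [filter_true] at h
  rw [h, sum_map, sum_product]
  rfl

lemma rodriguesOp_pochPair (r : ℕ) (β : ℂ) (c : Fin r → ℂ) (hc : ∀ ℓ, c ℓ ≠ 0)
    (n : Fin r → ℕ) (a b : ℕ) :
    rodriguesOp r β c n (pochPair a b (β + ∑ i, (n i : ℂ))) =
      ∑ k ∈ Fintype.piFinset (fun i => range (n i + 1)),
        (∏ ℓ, meixnerWeight (c ℓ) (n ℓ) (k ℓ)) •
          pochPair (a + ∑ i, k i) (b + ∑ i, (n i - k i)) β := by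
  induction r generalizing β a b with
  | zero => simp [rodriguesOp]
  | succ r ih =>
    have hβ : β + ∑ i, (n i : ℂ) = β + n 0 + ∑ i, (Fin.tail n i : ℂ) := by
      rw [Fin.sum_univ_succ, add_assoc]; rfl
    rw [rodriguesOp_succ, Function.comp_apply, hβ, ih _ (Fin.tail c) (fun ℓ => hc ℓ.succ),
      ← coe_chainPsiLinear, map_sum, sum_piFinset_succ, sum_comm]
    refine sum_congr rfl fun k _ => ?_
    rw [map_smul, coe_chainPsiLinear, chainPsi_pochPair (hc 0), smul_sum]
    refine sum_congr rfl fun k₀ _ => ?_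
    simp only [Fin.prod_univ_succ, Fin.sum_univ_succ, Fin.cons_zero, Fin.cons_succ, smul_smul]
    rw [mul_comm, add_comm k₀, add_comm (n 0 - k₀), ← add_assoc, ← add_assoc]
    rfl

theorem meixner_rodrigues_explicit_general (r : ℕ) (c : Fin r → ℂ)
    (hc0 : ∀ ℓ, c ℓ ≠ 0) (β : ℂ) (n : Fin r → ℕ) (x : ℂ) :
    ((List.finRange r).foldr
        (fun ℓ g =>
          chainPsi (c ℓ)
            (β + ((∑ i ∈ Finset.univ.filter (fun i : Fin r => i < ℓ), n i : ℕ) : ℂ))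
            (n ℓ) ∘ g)
        id) (fun _ => 1) x
      = meixnerAngelesco r β c n x := by
  have hone : (fun _ : ℂ => (1 : ℂ)) = pochPair 0 0 (β + ∑ i, (n i : ℂ)) := by
    funext y
    simp [pochPair, poch]
  change rodriguesOp r β c n (fun _ => 1) x = _
  rw [hone, rodriguesOp_pochPair r β c hc0 n, Finset.sum_apply, meixnerAngelesco]
  refine sum_congr rfl fun k hk => ?_
  have hkn : ∀ i ∈ univ, k i ≤ n i := fun i _ =>
    Nat.lt_succ_iff.1 (mem_range.1 (Fintype.mem_piFinset.1 hk i))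
  rw [Pi.smul_apply, smul_eq_mul, pochPair, sum_tsub_distrib univ hkn, zero_add, zero_add,
    ← mul_assoc]
  rfl

/-- Rodrigues-type formula for the type II Meixner--Angelesco polynomials
of the first kind: the composition over all rays of the raising operators
`Ψ^{β+N_ℓ+1}_{c_ℓ} ∘ ⋯ ∘ Ψ^{β+N_ℓ+n_ℓ}_{c_ℓ}` (with `N_ℓ = n_0 + ⋯ + n_{ℓ-1}`) applied to
the constant function `1` equals the explicit polynomial `M^{β,c}_n`. -/
theorem meixner_rodrigues_explicit (r : ℕ) (hr : 1 ≤ r) (c : Fin r → ℂ)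
    (hc0 : ∀ ℓ, c ℓ ≠ 0) (hc1 : ∀ ℓ, c ℓ ≠ 1) (β : ℂ) (n : Fin r → ℕ) (x : ℂ) :
    ((List.finRange r).foldr
        (fun ℓ g =>
          chainPsi (c ℓ)
            (β + ((∑ i ∈ Finset.univ.filter (fun i : Fin r => i < ℓ), n i : ℕ) : ℂ))
            (n ℓ) ∘ g)
        id) (fun _ => 1) x
      = meixnerAngelesco r β c n x :=
  meixner_rodrigues_explicit_general r c hc0 β n x
end
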